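/- For any nonzero polynomial q ∈ K[x_1,...,x_n] over a field K, the exponent vector of the leading monomial of q with respect to a pure lexicographic order is a vertex (extreme point) of the Newton polytope of q. -/

import Mathlib

/-!
Once the coordinates are permuted by `σ`, the lexicographic order makes `ℝⁿ` an ordered vector
space in which positive scalings are strictly monotone. So the lex sublevel set of the leading
exponent is convex and contains the Newton polytope, and the leading exponent cannot lie strictly
inside a segment whose endpoints are both lex-below it.
-/

open MvPolynomial

instance Pi.Lex.posSMulStrictMono {ι α : Type*} {β : ι → Type*} [LinearOrder ι]
    [Zero α] [Preorder α] [∀ i, PartialOrder (β i)] [∀ i, SMul α (β i)]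
    [∀ i, PosSMulStrictMono α (β i)] : PosSMulStrictMono α (Lex (∀ i, β i)) where
  smul_lt_smul_of_pos_left a ha x y := by
    rintro ⟨i, heq, hlt⟩
    exact ⟨i, fun j hj => congrArg (a • ·) (heq j hj), smul_lt_smul_of_pos_left hlt ha⟩

theorem eq_of_le_of_le_of_mem_openSegment {𝕜 E : Type*} [Semiring 𝕜] [PartialOrder 𝕜]
    [IsOrderedRing 𝕜] [AddCommMonoid E] [PartialOrder E] [IsOrderedCancelAddMonoid E]
    [Module 𝕜 E] [PosSMulStrictMono 𝕜 E] {x y p : E} (hx : x ≤ p) (hy : y ≤ p)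
    (hp : p ∈ openSegment 𝕜 x y) : x = p := by
  obtain ⟨a, b, ha, hb, hab, rfl⟩ := hp
  by_contra hne
  have : a • x + b • y < a • (a • x + b • y) + b • (a • x + b • y) :=
    add_lt_add_of_lt_of_le (smul_lt_smul_of_pos_left (hx.lt_of_ne hne) ha)
      (smul_le_smul_of_nonneg_left hy hb.le)
  rw [Convex.combo_self hab] at this
  exact this.false

theorem mem_extremePoints_convexHull_of_forall_le {𝕜 E F : Type*} [Semiring 𝕜] [PartialOrder 𝕜]
    [IsOrderedRing 𝕜] [AddCommMonoid E] [Module 𝕜 E] [AddCommMonoid F] [PartialOrder F]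
    [IsOrderedCancelAddMonoid F] [Module 𝕜 F] [PosSMulStrictMono 𝕜 F] {f : E →ₗ[𝕜] F}
    (hf : Function.Injective f) {S : Set E} {p : E} (hp : p ∈ S) (hle : ∀ x ∈ S, f x ≤ f p) :
    p ∈ (convexHull 𝕜 S).extremePoints 𝕜 := by
  have hhull : convexHull 𝕜 S ⊆ f ⁻¹' Set.Iic (f p) :=
    convexHull_min hle ((convex_Iic (f p)).linear_preimage f)
  refine mem_extremePoints_iff_left.2 ⟨subset_convexHull 𝕜 S hp, fun x hx y hy hpxy => ?_⟩
  refine hf (eq_of_le_of_le_of_mem_openSegment (𝕜 := 𝕜) (hhull hx) (hhull hy) ?_)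
  obtain ⟨a, b, ha, hb, hab, rfl⟩ := hpxy
  exact ⟨a, b, ha, hb, hab, by rw [map_add, map_smul, map_smul]⟩

theorem StrictMono.toLex_comp_le_toLex_comp {ι N β : Type*} [LinearOrder ι] [Zero N]
    [PartialOrder N] [PartialOrder β] {g : N → β} (hg : StrictMono g) {x y : ι →₀ N}
    (hxy : toLex x ≤ toLex y) :
    toLex (g ∘ ⇑x) ≤ toLex (g ∘ ⇑y) := by
  rcases hxy.lt_or_eq with ⟨i, heq, hlt⟩ | heq
  · exact le_of_lt ⟨i, fun j hj => congrArg g (heq j hj), hg hlt⟩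
  · rw [toLex.injective heq]

theorem stmt_6_general (K : Type*) [Field K] (n : ℕ) (q : MvPolynomial (Fin n) K)
    (σ : Equiv.Perm (Fin n)) (m : Fin n →₀ ℕ) (hm : m ∈ q.support)
    (hlead : ∀ m' ∈ q.support,
      toLex (Finsupp.equivMapDomain σ m') ≤ toLex (Finsupp.equivMapDomain σ m)) :
    (fun i => (m i : ℝ)) ∈
      Set.extremePoints ℝ
        (convexHull ℝ ((fun (m : Fin n →₀ ℕ) (i : Fin n) => (m i : ℝ)) '' q.support)) := by
  let f : (Fin n → ℝ) →ₗ[ℝ] Lex (Fin n → ℝ) :=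
    (toLexLinearEquiv ℝ (Fin n → ℝ)).toLinearMap ∘ₗ LinearMap.funLeft ℝ ℝ σ.symm
  have hf : Function.Injective f :=
    (toLexLinearEquiv ℝ _).injective.comp
      (LinearMap.funLeft_injective_of_surjective ℝ ℝ σ.symm σ.symm.surjective)
  refine mem_extremePoints_convexHull_of_forall_le hf ⟨m, hm, rfl⟩ ?_
  rintro _ ⟨m', hm', rfl⟩
  exact Nat.strictMono_cast.toLex_comp_le_toLex_comp (hlead m' hm')

/-- For a nonzero polynomial `q`, the exponent vector of the leading monomial of `q` with
respect to a pure lexicographic order (given by an ordering `σ` of the variables) is a vertex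
(extreme point) of the Newton polytope of `q`. -/
theorem stmt_6 (K : Type*) [Field K] (n : ℕ) (q : MvPolynomial (Fin n) K) (hq : q ≠ 0)
    (σ : Equiv.Perm (Fin n)) (m : Fin n →₀ ℕ) (hm : m ∈ q.support)
    (hlead : ∀ m' ∈ q.support,
      toLex (Finsupp.equivMapDomain σ m') ≤ toLex (Finsupp.equivMapDomain σ m)) :
    (fun i => (m i : ℝ)) ∈
      Set.extremePoints ℝ
        (convexHull ℝ ((fun (m : Fin n →₀ ℕ) (i : Fin n) => (m i : ℝ)) '' q.support)) :=
  stmt_6_general K n q σ m hm hlead
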